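/- The futile cycle network is not endotactic. Specifically, for the network with species (S₀, E, ES₀, S₁, F, FS₁) and reactions R₁: S₀+E → ES₀, R₂: ES₀ → S₀+E, R₃: ES₀ → S₁+E, R₄: S₁+F → FS₁, R₅: FS₁ → S₁+F, R₆: FS₁ → S₀+F, the vector w = (9.9, 0.1, 10, 0, 10, 10) ∈ ℝ⁶ satisfies w·y(i) = 10 for every reaction source y(i), and w·(y'(3) − y(3)) = −9.9 < 0, which witnesses that the network is not endotactic. -/

import Mathlib

/-!
If a reaction leaving a source of minimal `w`-level decreases `w`, endotacticity would demand
another reaction whose source has strictly smaller `w`-level, and there is none. For the futile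
cycle and `w = (9.9, 0.1, 10, 0, 10, 10)` all six sources have level `10`, and `R₃` lowers `w`
by `9.9`.
-/

/-- Dot product on `Fin m → ℝ`. -/
def dot {m : ℕ} (w v : Fin m → ℝ) : ℝ := ∑ k, w k * v k

/-- Endotactic reaction network. -/
def Endotactic {m : ℕ} {ι : Type*} [Fintype ι] (y y' : ι → Fin m → ℝ) : Prop :=
  ∀ w : Fin m → ℝ, ∀ i : ι, dot w (y' i - y i) < 0 →
    ∃ j : ι, dot w (y j - y i) < 0 ∧ 0 < dot w (y' j - y j)

/-- Source vectors of the futile cycle (species order S₀, E, ES₀, S₁, F, FS₁). -/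
def futileSrc : Fin 6 → Fin 6 → ℝ :=
  ![![1,1,0,0,0,0], ![0,0,1,0,0,0], ![0,0,1,0,0,0],
    ![0,0,0,1,1,0], ![0,0,0,0,0,1], ![0,0,0,0,0,1]]

/-- Target vectors of the futile cycle. -/
def futileTgt : Fin 6 → Fin 6 → ℝ :=
  ![![0,0,1,0,0,0], ![1,1,0,0,0,0], ![0,1,0,1,0,0],
    ![0,0,0,0,0,1], ![0,0,0,1,1,0], ![1,0,0,0,1,0]]

lemma dot_sub {m : ℕ} (w u v : Fin m → ℝ) : dot w (u - v) = dot w u - dot w v := by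
  simp only [dot, Pi.sub_apply, mul_sub, Finset.sum_sub_distrib]

lemma not_endotactic_of_isMin_source {m : ℕ} {ι : Type*} [Fintype ι] {y y' : ι → Fin m → ℝ}
    (w : Fin m → ℝ) (i : ι) (hmin : ∀ j, dot w (y i) ≤ dot w (y j))
    (hdown : dot w (y' i - y i) < 0) : ¬ Endotactic y y' := by
  intro h
  obtain ⟨j, hj, -⟩ := h w i hdown
  rw [dot_sub] at hj
  linarith [hmin j]

lemma not_endotactic_of_dot_source_eq {m : ℕ} {ι : Type*} [Fintype ι] {y y' : ι → Fin m → ℝ}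
    (w : Fin m → ℝ) (c : ℝ) (hsrc : ∀ j, dot w (y j) = c) (i : ι)
    (hdown : dot w (y' i - y i) < 0) : ¬ Endotactic y y' :=
  not_endotactic_of_isMin_source w i (fun j => ((hsrc i).trans (hsrc j).symm).le) hdown

/-- The futile cycle is not endotactic, as witnessed by `w = (9.9, 0.1, 10, 0, 10, 10)`:
every source complex has `w·y(i) = 10`, while reaction `R₃ : ES₀ → S₁ + E`
satisfies `w·(y'(3) − y(3)) = −9.9 < 0`. -/
theorem futileCycle_not_endotactic :
    (∀ i : Fin 6, dot ![9.9, 0.1, 10, 0, 10, 10] (futileSrc i) = 10) ∧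
    dot ![9.9, 0.1, 10, 0, 10, 10] (futileTgt 2 - futileSrc 2) = -9.9 ∧
    ¬ Endotactic futileSrc futileTgt := by
  have hsrc : ∀ i : Fin 6, dot ![9.9, 0.1, 10, 0, 10, 10] (futileSrc i) = 10 := by
    intro i
    fin_cases i <;> norm_num [dot, futileSrc, Fin.sum_univ_succ]
  have hdown : dot ![9.9, 0.1, 10, 0, 10, 10] (futileTgt 2 - futileSrc 2) = -9.9 := by
    simp [dot, futileSrc, futileTgt, Fin.sum_univ_succ]
    norm_num
  exact ⟨hsrc, hdown,
    not_endotactic_of_dot_source_eq _ 10 hsrc 2 (by rw [hdown]; norm_num)⟩
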